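/- For every decision tree T, OPT_T ≤ sqrt(2 · DTSize(T)), where DTSize(T) is the number of nodes of T. -/

import Mathlib

/-- A deterministic decision tree over `{0,1}^n`: every internal node is labeled
by a query index `i ∈ Fin n` and has exactly two children (a 0-child and a
1-child); every leaf is labeled by an output value. -/
inductive DTree (n : ℕ) : Type where
  | leaf (b : Bool) : DTree n
  | node (i : Fin n) (t0 t1 : DTree n) : DTree n

namespace DTree

/-- On input `x`, from each internal node labeled `i` follow the edge to the
`x i`-child; output the label of the leaf reached. -/
def eval {n : ℕ} : DTree n → (Fin n → Bool) → Bool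
  | leaf b, _ => b
  | node i t0 t1, x => if x i then t1.eval x else t0.eval x

/-- `DTSize`: the total number of nodes of the tree. -/
def size {n : ℕ} : DTree n → ℕ
  | leaf _ => 1
  | node _ t0 t1 => 1 + t0.size + t1.size

/-- The depth: the maximum number of edges on a root-to-leaf path. -/
def depth {n : ℕ} : DTree n → ℕ
  | leaf _ => 0
  | node _ t0 t1 => 1 + max t0.depth t1.depth

/-- The rank of a binary tree: a leaf has rank 0; an internal node whose two
children have ranks `r₁, r₂` has rank `max r₁ r₂` if `r₁ ≠ r₂`, and `r₁ + 1`
if `r₁ = r₂`. -/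
def rank {n : ℕ} : DTree n → ℕ
  | leaf _ => 0
  | node _ t0 t1 => if t0.rank = t1.rank then t0.rank + 1 else max t0.rank t1.rank

end DTree

/-- The decision tree `t` computes the total Boolean function `f`. -/
def ComputesFn {n : ℕ} (t : DTree n) (f : (Fin n → Bool) → Bool) : Prop :=
  ∀ x, t.eval x = f x

/-- An assignment of one real weight to each edge of a binary tree, recorded as a
tree of the same shape: at every internal node, `w0` is the weight of the edge to
the 0-child and `w1` the weight of the edge to the 1-child. -/
inductive WTree : Type where
  | leaf : WTree
  | node (w0 w1 : ℝ) (c0 c1 : WTree) : WTree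

namespace WTree

/-- All weights are strictly positive. -/
def Pos : WTree → Prop
  | leaf => True
  | node w0 w1 c0 c1 => 0 < w0 ∧ 0 < w1 ∧ c0.Pos ∧ c1.Pos

/-- `max_{P ∈ P(T)} Σ_{e ∈ P} 1 / W_e`: the maximum over root-to-leaf paths `P`
of the sum of the inverse weights of the edges along `P`. -/
noncomputable def pathCost : WTree → ℝ
  | leaf => 0
  | node w0 w1 c0 c1 => max (1 / w0 + c0.pathCost) (1 / w1 + c1.pathCost)

/-- `max_{P ∈ P(T)} Σ_{e ∈ P̄} W_e`: the maximum over root-to-leaf paths `P` of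
the sum of the weights of the edges having exactly one endpoint on `P`
(i.e. at each internal node of `P`, the edge to the child off the path). -/
noncomputable def devCost : WTree → ℝ
  | leaf => 0
  | node w0 w1 c0 c1 => max (w1 + c0.devCost) (w0 + c1.devCost)

end WTree

/-- The weight assignment `w` has the same shape as the decision tree `t`
(i.e. it assigns a weight to each edge of `t`). -/
def MatchesW {n : ℕ} : DTree n → WTree → Prop
  | DTree.leaf _, WTree.leaf => True
  | DTree.node _ t0 t1, WTree.node _ _ c0 c1 => MatchesW t0 c0 ∧ MatchesW t1 c1
  | _, _ => False

/-- `OPT_T`: the infimum, over all positive weight assignments `W` to the edges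
of `T`, of `sqrt((max_{P} Σ_{e∈P̄} W_e) · (max_{P} Σ_{e∈P} 1/W_e))`.
For a single leaf this is `0`. -/
noncomputable def OPT {n : ℕ} (t : DTree n) : ℝ :=
  sInf {v : ℝ | ∃ w : WTree, MatchesW t w ∧ w.Pos ∧
    v = Real.sqrt (w.devCost * w.pathCost)}


/-!
Weights are built bottom-up so that both costs of the subtree at a node of size `s` stay below
`√(2 s)`. At a node whose subtrees have budgets `x₀ = √(2 s₀)`, `x₁ = √(2 s₁)`, let
`z = √(2 (1 + s₀ + s₁))`, so that `z² = x₀² + x₁² + 2`, and put weight `1 / (z - xᵢ)` on the edge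
to the `i`-child. Every path then costs at most `(z - xᵢ) + xᵢ = z`, and every deviation costs at
most `1 / (z - x₁) + x₀ ≤ z` (or symmetrically), which amounts to `(z - x₀) (z - x₁) ≥ 1`.
-/

/-- The identity behind it is `z² (x + y)² = (1 + x² + y² + x y)² - (1 - x y)²`. -/
lemma one_le_sub_mul_sub_of_sq_eq {x y z : ℝ} (hx : 0 ≤ x) (hy : 0 ≤ y)
    (h : z ^ 2 = x ^ 2 + y ^ 2 + 2) : 1 ≤ (z - x) * (z - y) := by
  have hcross : z * (x + y) ≤ 1 + x ^ 2 + y ^ 2 + x * y := by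
    refine le_trans (le_abs_self _) (abs_le_of_sq_le_sq ?_ (by positivity))
    nlinarith [sq_nonneg (1 - x * y)]
  nlinarith

namespace WTree

lemma pathCost_nonneg : ∀ {w : WTree}, w.Pos → 0 ≤ w.pathCost
  | leaf, _ => le_rfl
  | node _ _ _ _, ⟨h0, _, hc0, _⟩ =>
    le_max_of_le_left (add_nonneg (one_div_pos.mpr h0).le (pathCost_nonneg hc0))

variable {c0 c1 : WTree} {x0 x1 z : ℝ}

lemma pathCost_node_le (hp0 : c0.pathCost ≤ x0) (hp1 : c1.pathCost ≤ x1) :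
    (node (1 / (z - x0)) (1 / (z - x1)) c0 c1).pathCost ≤ z := by
  simp only [pathCost, one_div_one_div]
  exact max_le (by linarith) (by linarith)

lemma devCost_node_le (h0 : x0 < z) (h1 : x1 < z) (hkey : 1 ≤ (z - x0) * (z - x1))
    (hd0 : c0.devCost ≤ x0) (hd1 : c1.devCost ≤ x1) :
    (node (1 / (z - x0)) (1 / (z - x1)) c0 c1).devCost ≤ z := by
  have hw1 : 1 / (z - x1) ≤ z - x0 := (div_le_iff₀ (by linarith)).mpr hkey
  have hw0 : 1 / (z - x0) ≤ z - x1 := (div_le_iff₀ (by linarith)).mpr (by linarith)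
  exact max_le (by linarith) (by linarith)

end WTree

theorem DTree.exists_weights_costs_le_sqrt_two_size {n : ℕ} (t : DTree n) :
    ∃ w : WTree, MatchesW t w ∧ w.Pos ∧
      w.devCost ≤ √(2 * t.size) ∧ w.pathCost ≤ √(2 * t.size) := by
  induction t with
  | leaf _ => exact ⟨.leaf, trivial, trivial, by simp [WTree.devCost], by simp [WTree.pathCost]⟩
  | node i t0 t1 ih0 ih1 =>
    obtain ⟨w0, hm0, hpos0, hd0, hp0⟩ := ih0
    obtain ⟨w1, hm1, hpos1, hd1, hp1⟩ := ih1
    have hs0 : (0 : ℝ) ≤ t0.size := Nat.cast_nonneg _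
    have hs1 : (0 : ℝ) ≤ t1.size := Nat.cast_nonneg _
    set x0 := √(2 * (t0.size : ℝ))
    set x1 := √(2 * (t1.size : ℝ))
    have hsize : 2 * ((node i t0 t1).size : ℝ) = 2 + 2 * t0.size + 2 * t1.size := by
      simp only [size]; push_cast; ring
    rw [hsize]
    set z := √(2 + 2 * (t0.size : ℝ) + 2 * t1.size)
    have h0 : x0 < z := Real.sqrt_lt_sqrt (by positivity) (by linarith)
    have h1 : x1 < z := Real.sqrt_lt_sqrt (by positivity) (by linarith)
    have hz : z ^ 2 = x0 ^ 2 + x1 ^ 2 + 2 := by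
      rw [Real.sq_sqrt (by positivity), Real.sq_sqrt (by positivity), Real.sq_sqrt (by positivity)]
      ring
    have hkey := one_le_sub_mul_sub_of_sq_eq (Real.sqrt_nonneg _) (Real.sqrt_nonneg _) hz
    refine ⟨.node (1 / (z - x0)) (1 / (z - x1)) w0 w1, ⟨hm0, hm1⟩,
      ⟨by simpa using h0, by simpa using h1, hpos0, hpos1⟩,
      WTree.devCost_node_le h0 h1 hkey hd0 hd1, WTree.pathCost_node_le hp0 hp1⟩

lemma OPT_le_sqrt_costs {n : ℕ} {t : DTree n} {w : WTree} (hm : MatchesW t w) (hpos : w.Pos) :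
    OPT t ≤ √(w.devCost * w.pathCost) :=
  csInf_le ⟨0, by rintro _ ⟨_, _, _, rfl⟩; exact Real.sqrt_nonneg _⟩ ⟨w, hm, hpos, rfl⟩

/-- For every decision tree `T`,
`OPT_T ≤ sqrt(2 · DTSize(T))`, where `DTSize(T)` is the number of nodes of `T`. -/
theorem OPT_le_sqrt_two_size {n : ℕ} (t : DTree n) :
    OPT t ≤ Real.sqrt (2 * (t.size : ℝ)) := by
  obtain ⟨w, hm, hpos, hd, hp⟩ := t.exists_weights_costs_le_sqrt_two_size
  calc OPT t ≤ √(w.devCost * w.pathCost) := OPT_le_sqrt_costs hm hpos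
    _ ≤ √(√(2 * t.size) * √(2 * t.size)) :=
      Real.sqrt_le_sqrt (mul_le_mul hd hp (WTree.pathCost_nonneg hpos) (Real.sqrt_nonneg _))
    _ = √(2 * t.size) := Real.sqrt_mul_self (Real.sqrt_nonneg _)
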